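/- Let $A$ be a unital associative ring and let $k \ge 2$ be an integer. Then for all $a_1, \dots, a_k, u, v, w \in A$, writing $c = [a_1, \dots, a_k]$, the element $[c, v][u, w] + [c, w][u, v]$ belongs to $T^{(k+2)}(A)$. -/
import Mathlib


/-- The ring commutator `[a, b] = a * b - b * a`. -/
def brk {A : Type*} [NonUnitalNonAssocRing A] (a b : A) : A := a * b - b * a

/-- The left-normed commutator `[a 0, a 1, ..., a (k-1)]`. -/
def lnc {A : Type*} [NonUnitalNonAssocRing A] : ∀ {k : ℕ}, (Fin k → A) → A
  | 0, _ => 0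
  | 1, a => a 0
  | k + 2, a => brk (lnc (Fin.init a)) (a (Fin.last (k + 1)))

/-- `T A m` is the two-sided ideal of `A` generated by all left-normed commutators
of length `m` (for `m = 1` this is all of `A`). -/
def T (A : Type*) [NonUnitalNonAssocRing A] (m : ℕ) : TwoSidedIdeal A :=
  TwoSidedIdeal.span {x | ∃ a : Fin m → A, x = lnc a}

lemma lnc_snoc {A : Type*} [NonUnitalNonAssocRing A] {n : ℕ} (a : Fin (n + 1) → A) (b : A) :
    lnc (Fin.snoc a b) = brk (lnc a) b := by
  show lnc (k := n + 2) (Fin.snoc a b) = _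
  rw [lnc]
  simp [Fin.init_snoc, Fin.snoc_last]

theorem comm_v_mul_comm_w_add_mem {A : Type*} [Ring A] (k : ℕ) (hk : 2 ≤ k)
    (a : Fin k → A) (u v w : A) :
    brk (lnc a) v * brk u w + brk (lnc a) w * brk u v ∈ T A (k + 2) := by
  obtain ⟨n, rfl⟩ : ∃ n, k = n + 1 := ⟨k - 1, by omega⟩
  set c := lnc a with hc
  have H : ∀ b x : A, brk (brk c b) x ∈ T A (n + 1 + 2) := by
    intro b x
    refine TwoSidedIdeal.subset_span ⟨Fin.snoc (Fin.snoc a b) x, ?_⟩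
    rw [lnc_snoc, lnc_snoc]
  have key : brk c v * brk u w + brk c w * brk u v =
      brk (brk c v) u * w + brk (brk c w) (u * v)
        - brk (brk c w) v * u - brk (brk c (v * w)) u := by
    simp only [brk]; noncomm_ring
  rw [key]
  exact sub_mem (sub_mem (add_mem (TwoSidedIdeal.mul_mem_right _ _ _ (H v u)) (H w (u * v)))
    (TwoSidedIdeal.mul_mem_right _ _ _ (H w v))) (H (v * w) u)
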